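/- arXiv:2506.01664 — 2 statements merged into one kernel-verified Lean document; each statement's English description precedes it below -/
import Mathlib

section
/- Let T0 = LI([0,1]) be linear arithmetic over the interval [0,1], and let T = T0 ∪ K be its extension with a unary function symbol f satisfying K = { ∀x∀y (x ≤ y → f(x) ≤ f(y)), ∀x (f(x) ≤ 1) }. Let G = (a ≤ b) ∧ (b ≤ f(b)). Then G has no T-general uniform interpolant w.r.t. Σ_s ∪ C_s for Σ_s = {f} and C_s = {a}: (i) G ⊨_T a ≤ fⁿ(1) for every n ∈ ℕ, yet (ii) for every quantifier-free formula ψ over the signature of T0 extended with f and the constant a, if k is such that f^{k+1}(1) does not occur in ψ and G ⊨_T ψ, then ψ ⊭_T a ≤ f^{k+1}(1); hence no finite formula satisfies both defining conditions of a T-general uniform interpolant of G w.r.t. {f, a}. -/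
/- Common framework: first-order signatures with designated sets of interpreted symbols,
uninterpreted (extension) function symbols and fresh constants, clauses, flatness/linearity,
instances, locality of theory extensions, (general) uniform interpolants, and a semantic
specification of the symbol-elimination Algorithm 1 of the paper. -/

open FirstOrder FirstOrder.Language

namespace PaperSE

variable {L : FirstOrder.Language.{0, 0}}

/-- A function symbol of `L` together with its arity. Constants are the arity-0 symbols. -/
abbrev Sym (L : FirstOrder.Language.{0, 0}) : Type := Σ n : ℕ, L.Functions n

/-- Ground terms (no variables; constants are `0`-ary function symbols of `L`). -/
abbrev GTerm (L : FirstOrder.Language.{0, 0}) : Type := L.Term Empty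

/-- A ground term viewed as a term with variables from `α`. -/
def GTerm.cast {α : Type} (t : GTerm L) : L.Term α := Term.relabel Empty.elim t

/-- The term `c()` for a constant symbol `c`. -/
def constT (c : L.Functions 0) : GTerm L := Term.func c (fun j => j.elim0)

/- ### Structures, with the interpretation passed explicitly -/

def FunM (M : Type) (S : L.Structure M) {n : ℕ} (f : L.Functions n) (x : Fin n → M) : M := by
  letI := S; exact Structure.funMap f x

def RelM (M : Type) (S : L.Structure M) {n : ℕ} (r : L.Relations n) (x : Fin n → M) : Prop := by
  letI := S; exact Structure.RelMap r x

def TVal (M : Type) (S : L.Structure M) {α : Type} (v : α → M) (t : L.Term α) : M := by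
  letI := S; exact t.realize v

/-- Value of a ground term. -/
def GVal (M : Type) (S : L.Structure M) (t : GTerm L) : M :=
  TVal M S (fun e : Empty => e.elim) t

def RealizeF (M : Type) (S : L.Structure M) {α : Type} (φ : L.Formula α) (v : α → M) : Prop := by
  letI := S; exact φ.Realize v

def RealizeSent (M : Type) (S : L.Structure M) (φ : L.Sentence) : Prop :=
  RealizeF M S φ (fun e : Empty => e.elim)

def ModelsT (M : Type) (S : L.Structure M) (T : L.Theory) : Prop :=
  ∀ φ ∈ T, RealizeSent M S φ

/- ### Symbols and ground terms occurring in terms and formulas -/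

/-- The set of subterms of a term. -/
def subterms {α : Type} : L.Term α → Set (L.Term α)
  | .var a => {Term.var a}
  | .func f ts => insert (Term.func f ts) (⋃ i, subterms (ts i))

/-- The function (and constant) symbols occurring in a term. -/
def termSyms {α : Type} : L.Term α → Set (Sym L)
  | .var _ => ∅
  | .func f ts => insert ⟨_, f⟩ (⋃ i, termSyms (ts i))

/-- The list of occurrences of variables in a term. -/
def varOccs {α : Type} : L.Term α → List α
  | .var a => [a]
  | .func _ ts => (List.finRange _).flatMap (fun i => varOccs (ts i))

/-- The list of occurrences of constant symbols in a ground term. -/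
def constOccs : GTerm L → List (L.Functions 0)
  | .var e => e.elim
  | .func (l := n) f ts =>
      if h : n = 0 then [h ▸ f]
      else (List.finRange n).flatMap (fun i => constOccs (ts i))

/-- Does the term start with a function symbol from `F`? -/
def rootIn (F : Set (Sym L)) {α : Type} : L.Term α → Prop
  | .var _ => False
  | .func f _ => (⟨_, f⟩ : Sym L) ∈ F

/-- The function (and constant) symbols occurring in a bounded formula. -/
def bfSyms {α : Type} : ∀ {n : ℕ}, L.BoundedFormula α n → Set (Sym L)
  | _, .falsum => ∅
  | _, .equal t u => termSyms t ∪ termSyms u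
  | _, .rel _ ts => ⋃ i, termSyms (ts i)
  | _, .imp f g => bfSyms f ∪ bfSyms g
  | _, .all f => bfSyms f

abbrev sentSyms (s : L.Sentence) : Set (Sym L) := bfSyms s

def theorySyms (T : L.Theory) : Set (Sym L) := ⋃ s ∈ T, sentSyms s

/-- The ground terms occurring in a bounded formula. -/
def bfGTerms {α : Type} : ∀ {n : ℕ}, L.BoundedFormula α n → Set (GTerm L)
  | _, .falsum => ∅
  | _, .equal t u => {g | GTerm.cast g ∈ subterms t ∨ GTerm.cast g ∈ subterms u}
  | _, .rel _ ts => {g | ∃ i, GTerm.cast g ∈ subterms (ts i)}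
  | _, .imp f g => bfGTerms f ∪ bfGTerms g
  | _, .all f => bfGTerms f

abbrev sentGTerms (s : L.Sentence) : Set (GTerm L) := bfGTerms s

/- ### Literals and clauses -/

/-- Literals over variables `α`. -/
inductive Lit (L : FirstOrder.Language.{0, 0}) (α : Type) : Type where
  | eq (t u : L.Term α)
  | neq (t u : L.Term α)
  | rel {n : ℕ} (R : L.Relations n) (ts : Fin n → L.Term α)
  | nrel {n : ℕ} (R : L.Relations n) (ts : Fin n → L.Term α)

namespace Lit

def terms {α : Type} : Lit L α → Set (L.Term α)
  | eq t u => {t, u}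
  | neq t u => {t, u}
  | rel _ ts => Set.range ts
  | nrel _ ts => Set.range ts

/-- An atom (positive literal). -/
def Positive {α : Type} : Lit L α → Prop
  | eq _ _ => True
  | rel _ _ => True
  | _ => False

def subst {α β : Type} (σ : α → L.Term β) : Lit L α → Lit L β
  | eq t u => eq (t.subst σ) (u.subst σ)
  | neq t u => neq (t.subst σ) (u.subst σ)
  | rel R ts => rel R (fun i => (ts i).subst σ)
  | nrel R ts => nrel R (fun i => (ts i).subst σ)

def Realize (M : Type) (S : L.Structure M) {α : Type} (v : α → M) : Lit L α → Prop
  | eq t u => TVal M S v t = TVal M S v u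
  | neq t u => TVal M S v t ≠ TVal M S v u
  | rel R ts => RelM M S R (fun i => TVal M S v (ts i))
  | nrel R ts => ¬ RelM M S R (fun i => TVal M S v (ts i))

def syms {α : Type} (l : Lit L α) : Set (Sym L) := ⋃ t ∈ l.terms, termSyms t

end Lit

/-- A (universally closed) clause: a disjunction of literals with variables `Fin nvars`,
viewed as universally quantified. -/
structure Clause (L : FirstOrder.Language.{0, 0}) : Type where
  nvars : ℕ
  lits : List (Lit L (Fin nvars))

/-- A ground clause: a disjunction of ground literals. -/
abbrev GClause (L : FirstOrder.Language.{0, 0}) : Type := List (Lit L Empty)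

def Clause.instantiate (C : Clause L) (σ : Fin C.nvars → GTerm L) : GClause L :=
  C.lits.map (Lit.subst σ)

def Clause.syms (C : Clause L) : Set (Sym L) := ⋃ l ∈ C.lits, Lit.syms l

def GClause.syms (C : GClause L) : Set (Sym L) := ⋃ l ∈ C, Lit.syms l

def GClause.gterms (C : GClause L) : Set (GTerm L) := ⋃ l ∈ C, ⋃ t ∈ Lit.terms l, subterms t

def ClausesSyms (K : Set (Clause L)) : Set (Sym L) := ⋃ C ∈ K, C.syms

def GSyms (G : Set (GClause L)) : Set (Sym L) := ⋃ C ∈ G, GClause.syms C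

def GTerms (G : Set (GClause L)) : Set (GTerm L) := ⋃ C ∈ G, GClause.gterms C

/- ### Satisfaction -/

def ClauseHolds (M : Type) (S : L.Structure M) (C : Clause L) : Prop :=
  ∀ v : Fin C.nvars → M, ∃ l ∈ C.lits, Lit.Realize M S v l

def GClauseHolds (M : Type) (S : L.Structure M) (C : GClause L) : Prop :=
  ∃ l ∈ C, Lit.Realize M S (fun e : Empty => e.elim) l

def ModelsK (M : Type) (S : L.Structure M) (K : Set (Clause L)) : Prop :=
  ∀ C ∈ K, ClauseHolds M S C

def ModelsG (M : Type) (S : L.Structure M) (G : Set (GClause L)) : Prop :=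
  ∀ C ∈ G, GClauseHolds M S C

/-- Satisfiability (in the joint signature) of base theory `T0`, clause set `K`
and ground clauses `G`. -/
def SatTKG (T0 : L.Theory) (K : Set (Clause L)) (G : Set (GClause L)) : Prop :=
  ∃ (M : Type) (_ : Nonempty M) (S : L.Structure M),
    ModelsT M S T0 ∧ ModelsK M S K ∧ ModelsG M S G

/-- `G ⊨_{T0 ∪ K} θ` for a sentence `θ`. -/
def EntailsC (T0 : L.Theory) (K : Set (Clause L)) (G : Set (GClause L)) (θ : L.Sentence) : Prop :=
  ∀ (M : Type) (S : L.Structure M), Nonempty M →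
    ModelsT M S T0 → ModelsK M S K → ModelsG M S G → RealizeSent M S θ

/-- `A ⊨_{T0 ∪ K} θ` for sentences `A`, `θ`. -/
def EntailsS (T0 : L.Theory) (K : Set (Clause L)) (A θ : L.Sentence) : Prop :=
  ∀ (M : Type) (S : L.Structure M), Nonempty M →
    ModelsT M S T0 → ModelsK M S K → RealizeSent M S A → RealizeSent M S θ

/- ### Extension ground terms and instances -/

/-- `est(K, G)`: the ground terms starting with a function symbol in `F`
occurring in `K` or in `G`. -/
def estKG (F : Set (Sym L)) (K : Set (Clause L)) (G : Set (GClause L)) : Set (GTerm L) :=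
  { t | rootIn F t ∧
      ((∃ C ∈ K, ∃ l ∈ C.lits, ∃ s ∈ Lit.terms l, GTerm.cast t ∈ subterms s) ∨
       (∃ C ∈ G, t ∈ GClause.gterms C)) }

/-- `K[Tt]`: the set of ground instances of clauses of `K` all of whose terms starting
with a function symbol in `F` belong to `Tt`. -/
def instancesIn (F : Set (Sym L)) (K : Set (Clause L)) (Tt : Set (GTerm L)) :
    Set (GClause L) :=
  { D | ∃ C ∈ K, ∃ σ : Fin C.nvars → GTerm L, D = C.instantiate σ ∧
      ∀ t ∈ GClause.gterms (C.instantiate σ), rootIn F t → t ∈ Tt }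

/- ### Locality -/

/-- Locality of the extension of the theory `T0` together with base clauses `K0`
by the clauses `K`, with extension symbols `F`. -/
def LocalExt2 (F : Set (Sym L)) (T0 : L.Theory) (K0 K : Set (Clause L)) : Prop :=
  ∀ G : Set (GClause L), G.Finite →
    ((¬ ∃ (M : Type) (_ : Nonempty M) (S : L.Structure M),
        ModelsT M S T0 ∧ ModelsK M S K0 ∧ ModelsK M S K ∧ ModelsG M S G) ↔
     (¬ ∃ (M : Type) (_ : Nonempty M) (S : L.Structure M),
        ModelsT M S T0 ∧ ModelsK M S K0 ∧
          ModelsG M S (instancesIn F K (estKG F K G) ∪ G)))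

/-- Locality of the theory extension `T0 ⊆ T0 ∪ K` with extension symbols `F`. -/
abbrev LocalExt (F : Set (Sym L)) (T0 : L.Theory) (K : Set (Clause L)) : Prop :=
  LocalExt2 F T0 ∅ K

/-- `Ψ`-locality of the theory extension `T0 ⊆ T0 ∪ K` with extension symbols `F`. -/
def PsiLocalExt (F : Set (Sym L)) (T0 : L.Theory) (K : Set (Clause L))
    (Ψ : Set (GTerm L) → Set (GTerm L)) : Prop :=
  ∀ G : Set (GClause L), G.Finite →
    (¬ SatTKG T0 K G ↔ ¬ SatTKG T0 ∅ (instancesIn F K (Ψ (estKG F K G)) ∪ G))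

/- ### Flatness and linearity -/

/-- All symbols occurring directly below a function symbol from `F` are variables. -/
def flatTerm (F : Set (Sym L)) {α : Type} : L.Term α → Prop
  | .var _ => True
  | .func f ts =>
      ((⟨_, f⟩ : Sym L) ∈ F → ∀ i, ∃ a, ts i = Term.var a) ∧ ∀ i, flatTerm F (ts i)

/-- All symbols occurring directly below a function symbol from `F` are constants. -/
def flatGTerm (F : Set (Sym L)) : GTerm L → Prop
  | .var e => e.elim
  | .func f ts =>
      ((⟨_, f⟩ : Sym L) ∈ F → ∀ i, ∃ c : L.Functions 0, ts i = constT c) ∧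
        ∀ i, flatGTerm F (ts i)

def Clause.extTerms (F : Set (Sym L)) (C : Clause L) : Set (L.Term (Fin C.nvars)) :=
  { t | rootIn F t ∧ ∃ l ∈ C.lits, ∃ s ∈ Lit.terms l, t ∈ subterms s }

def Clause.Flat (F : Set (Sym L)) (C : Clause L) : Prop :=
  ∀ l ∈ C.lits, ∀ t ∈ Lit.terms l, flatTerm F t

def Clause.Linear (F : Set (Sym L)) (C : Clause L) : Prop :=
  (∀ t ∈ C.extTerms F, ∀ u ∈ C.extTerms F,
      (∃ x, x ∈ varOccs t ∧ x ∈ varOccs u) → t = u) ∧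
  (∀ t ∈ C.extTerms F, (varOccs t).Nodup)

/-- Every variable occurring in the clause occurs below a function symbol from `F`. -/
def Clause.VarsBelowExt (F : Set (Sym L)) (C : Clause L) : Prop :=
  ∀ x : Fin C.nvars, (∃ l ∈ C.lits, ∃ s ∈ Lit.terms l, x ∈ varOccs s) →
    ∃ t ∈ C.extTerms F, x ∈ varOccs t

def GClause.extTerms (F : Set (Sym L)) (C : GClause L) : Set (GTerm L) :=
  { t | rootIn F t ∧ t ∈ GClause.gterms C }

def GClause.Flat (F : Set (Sym L)) (C : GClause L) : Prop :=
  ∀ l ∈ C, ∀ t ∈ Lit.terms l, flatGTerm F t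

def GClause.Linear (F : Set (Sym L)) (C : GClause L) : Prop :=
  (∀ t ∈ GClause.extTerms F C, ∀ u ∈ GClause.extTerms F C,
      (∃ c, c ∈ constOccs t ∧ c ∈ constOccs u) → t = u) ∧
  (∀ t ∈ GClause.extTerms F C, (constOccs t).Nodup)

/- ### Agreement of structures and (reduct-)embeddings -/

/-- The two interpretations agree on all relation symbols and on the function symbols in `F`. -/
def AgreeOn (M : Type) (S1 S2 : L.Structure M) (F : Set (Sym L)) : Prop :=
  (∀ (n : ℕ) (f : L.Functions n), (⟨n, f⟩ : Sym L) ∈ F →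
      ∀ x : Fin n → M, FunM M S1 f x = FunM M S2 f x) ∧
  (∀ (n : ℕ) (r : L.Relations n) (x : Fin n → M), RelM M S1 r x ↔ RelM M S2 r x)

/-- An embedding of the reducts to the subsignature consisting of all predicate symbols and
the function symbols in `F`: an injective map preserving and reflecting all predicates and
preserving the functions in `F`. -/
structure SubEmb (L : FirstOrder.Language.{0, 0}) (F : Set (Sym L)) (M N : Type)
    (SM : L.Structure M) (SN : L.Structure N) : Type where
  toFun : M → N
  inj : Function.Injective toFun
  map_fun : ∀ (n : ℕ) (f : L.Functions n), (⟨n, f⟩ : Sym L) ∈ F →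
      ∀ x : Fin n → M, toFun (FunM M SM f x) = FunM N SN f (toFun ∘ x)
  map_rel : ∀ (n : ℕ) (r : L.Relations n) (x : Fin n → M),
      RelM M SM r x ↔ RelM N SN r (toFun ∘ x)

/- ### Quantifier elimination and related properties of the base theory -/

/-- `T0` allows quantifier elimination (for formulas over the symbols in `F0`). -/
def HasQE (T0 : L.Theory) (F0 : Set (Sym L)) : Prop :=
  ∀ (m : ℕ) (φ : L.Formula (Fin m)), bfSyms φ ⊆ F0 →
    ∃ ψ : L.Formula (Fin m), ψ.IsQF ∧ bfSyms ψ ⊆ F0 ∧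
      ∀ (M : Type) (S : L.Structure M), Nonempty M → ModelsT M S T0 →
        ∀ v : Fin m → M, (RealizeF M S φ v ↔ RealizeF M S ψ v)

def ModelsLits (M : Type) (S : L.Structure M) (A : List (Lit L Empty)) : Prop :=
  ∀ l ∈ A, Lit.Realize M S (fun e : Empty => e.elim) l

def litListSyms (A : List (Lit L Empty)) : Set (Sym L) := ⋃ l ∈ A, Lit.syms l

/-- Convexity of a theory (with clause axioms `K`). -/
def Convex (T0 : L.Theory) (K : Set (Clause L)) : Prop :=
  ∀ Γ : List (Lit L Empty), (∀ l ∈ Γ, l.Positive) →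
  ∀ (m : ℕ) (s t : Fin (m + 1) → GTerm L),
    (∀ (M : Type) (S : L.Structure M), Nonempty M → ModelsT M S T0 → ModelsK M S K →
        ModelsLits M S Γ → ∃ i, GVal M S (s i) = GVal M S (t i)) →
    ∃ i0, ∀ (M : Type) (S : L.Structure M), Nonempty M → ModelsT M S T0 → ModelsK M S K →
        ModelsLits M S Γ → GVal M S (s i0) = GVal M S (t i0)

/-- Stable infiniteness. -/
def StablyInfinite (T0 : L.Theory) (K : Set (Clause L)) : Prop :=
  ∀ φ : L.Sentence, φ.IsQF →
    (∃ (M : Type) (_ : Nonempty M) (S : L.Structure M),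
        ModelsT M S T0 ∧ ModelsK M S K ∧ RealizeSent M S φ) →
    ∃ (M : Type) (_ : Infinite M) (S : L.Structure M),
        ModelsT M S T0 ∧ ModelsK M S K ∧ RealizeSent M S φ

/-- Equality interpolation (for a convex theory with interpreted symbols `F0`). -/
def EqInterpolating (T0 : L.Theory) (F0 : Set (Sym L)) : Prop :=
  ∀ (A B : List (Lit L Empty)) (a b : L.Functions 0),
    (⟨0, a⟩ : Sym L) ∉ litListSyms B → (⟨0, b⟩ : Sym L) ∉ litListSyms A →
    (∀ (M : Type) (S : L.Structure M), Nonempty M → ModelsT M S T0 → ModelsLits M S A →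
        ModelsLits M S B → GVal M S (constT a) = GVal M S (constT b)) →
    ∃ t : GTerm L, termSyms t ⊆ F0 ∪ (litListSyms A ∩ litListSyms B) ∧
      ∀ (M : Type) (S : L.Structure M), Nonempty M → ModelsT M S T0 → ModelsLits M S A →
        ModelsLits M S B →
          GVal M S (constT a) = GVal M S t ∧ GVal M S t = GVal M S (constT b)

/-- A universal sentence. -/
def IsUniversalSent (s : L.Sentence) : Prop :=
  ∃ (m : ℕ) (ψ : L.BoundedFormula Empty m), ψ.IsQF ∧ s = ψ.alls

def IsUniversalTheory (T : L.Theory) : Prop := ∀ s ∈ T, IsUniversalSent s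

/-- Close the outermost `k` bound variables existentially. -/
def exsTo {m : ℕ} : ∀ {k : ℕ}, L.BoundedFormula Empty (m + k) → L.BoundedFormula Empty m
  | 0, φ => φ
  | _ + 1, φ => exsTo φ.ex

/-- A `∀∃`-sentence. -/
def IsAESent (s : L.Sentence) : Prop :=
  ∃ (m k : ℕ) (ψ : L.BoundedFormula Empty (m + k)), ψ.IsQF ∧ s = (exsTo ψ).alls

def IsAETheory (T : L.Theory) : Prop := ∀ s ∈ T, IsAESent s

/- ### General uniform interpolants and uniform interpolants (covers) -/

/-- `ψ` is a general uniform interpolant of the ground clause set `G` w.r.t. the theory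
`T0 ∪ K` and the symbols in `Keep` (which contains all interpreted symbols, the shared
uninterpreted symbols and the shared constants). -/
def IsGUIg (T0 : L.Theory) (K : Set (Clause L)) (G : Set (GClause L))
    (Keep : Set (Sym L)) (ψ : L.Sentence) : Prop :=
  ψ.IsQF ∧ sentSyms ψ ⊆ Keep ∧ EntailsC T0 K G ψ ∧
  ∀ θ : L.Sentence, θ.IsQF → sentSyms θ ∩ GSyms G ⊆ Keep →
    EntailsC T0 K G θ → EntailsS T0 K ψ θ

/-- `ψ` is a general uniform interpolant of the ground formula `φ` w.r.t. the theory
`T0 ∪ K` and the symbols in `Keep`. -/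
def IsGUIs (T0 : L.Theory) (K : Set (Clause L)) (φ : L.Sentence)
    (Keep : Set (Sym L)) (ψ : L.Sentence) : Prop :=
  ψ.IsQF ∧ sentSyms ψ ⊆ Keep ∧ EntailsS T0 K φ ψ ∧
  ∀ θ : L.Sentence, θ.IsQF → sentSyms θ ∩ sentSyms φ ⊆ Keep →
    EntailsS T0 K φ θ → EntailsS T0 K ψ θ

/-- `ψ` is a uniform interpolant (cover) of `Γ` w.r.t. the theory `T0 ∪ K`, the set `CC`
of (eliminable) constants and the kept constants `Cs ⊆ CC`; all other symbols are treated
as interpreted. -/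
def IsUI (T0 : L.Theory) (K : Set (Clause L)) (CC Cs : Set (Sym L)) (Γ ψ : L.Sentence) : Prop :=
  ψ.IsQF ∧ sentSyms ψ ∩ CC ⊆ Cs ∧ EntailsS T0 K Γ ψ ∧
  ∀ θ : L.Sentence, θ.IsQF → sentSyms θ ∩ sentSyms Γ ∩ CC ⊆ Cs →
    EntailsS T0 K Γ θ → EntailsS T0 K ψ θ

/- ### The semantic specification of Algorithm 1 -/

/-- The constants occurring in some term of `S` as an argument of a function symbol in `Sigs`. -/
def argConstsOf (Sigs : Set (Sym L)) (S : Set (GTerm L)) : Set (Sym L) :=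
  { p | ∃ c : L.Functions 0, p = ⟨0, c⟩ ∧
      ∃ t ∈ S, ∃ (n : ℕ) (f : L.Functions n) (ts : Fin n → GTerm L),
        t = Term.func f ts ∧ (⟨n, f⟩ : Sym L) ∈ Sigs ∧ ∃ i, ts i = constT c }

/-- Semantic specification of the output `Γ` of Algorithm 1, applied to the theory extension
`T0 ∪ K` (extension symbols `F`), the ground clauses `G` and the instantiation terms `Tt`,
keeping exactly the symbols in `Keep` (all interpreted symbols, the parameters `Sigs` and the
non-eliminated constants):  `Γ` is a ground formula over `Keep` which, on each model of `T0`,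
expresses the existence of values for the eliminated constants and for the purified names of
the extension terms (equivalently, of a reinterpretation of the eliminated symbols) satisfying
`K[Tt] ∪ G`. -/
def AlgOneOutput (F : Set (Sym L)) (T0 : L.Theory) (K : Set (Clause L)) (G : Set (GClause L))
    (Tt : Set (GTerm L)) (Keep : Set (Sym L)) (Γ : L.Sentence) : Prop :=
  Γ.IsQF ∧ sentSyms Γ ⊆ Keep ∧
  ∀ (M : Type) (S : L.Structure M), Nonempty M → ModelsT M S T0 →
    (RealizeSent M S Γ ↔
      ∃ S' : L.Structure M, AgreeOn M S S' Keep ∧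
        ModelsG M S' (instancesIn F K Tt) ∧ ModelsG M S' G)

/- ### Implicit definability -/

/-- `f` is implicitly definable w.r.t. `T0 ∪ K` over the symbols in `Pi1`:
any two interpretations (on the same universe) which agree on `Pi1` and are both models
of `T0 ∪ K` interpret `f` in the same way.  (This is the standard semantic rendering of
the definition via renaming the symbols outside `Pi1` to primed copies.) -/
def ImplicitlyDefinable (T0 : L.Theory) (K : Set (Clause L)) (Pi1 : Set (Sym L))
    {n : ℕ} (f : L.Functions n) : Prop :=
  ∀ (M : Type), Nonempty M → ∀ S1 S2 : L.Structure M,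
    AgreeOn M S1 S2 Pi1 →
    ModelsT M S1 T0 → ModelsK M S1 K → ModelsT M S2 T0 → ModelsK M S2 K →
    ∀ x : Fin n → M, FunM M S1 f x = FunM M S2 f x

end PaperSE

namespace PaperSE

/-! **STATEMENT 5** (Example `counterexample`). -/

/-- The function symbols: the base constants `0`, `1` of `LI([0,1])`, the fresh constants
`a`, `b` and the unary extension function `f`. -/
inductive F01 : ℕ → Type where
  | zero : F01 0
  | one : F01 0
  | ca : F01 0
  | cb : F01 0
  | ff : F01 1

/-- The single relation symbol `≤`. -/
inductive R01 : ℕ → Type where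
  | le : R01 2

/-- The signature of `LI([0,1])` extended with `f` and the constants `a`, `b`. -/
def L01 : FirstOrder.Language.{0, 0} := ⟨F01, R01⟩

/-- The unit interval, the standard model of `LI([0,1])`. -/
abbrev UnitI : Type := Set.Icc (0 : ℝ) 1

/-- The standard interpretation on `[0,1]` (with dummy values for `f`, `a`, `b`). -/
noncomputable def stdS : L01.Structure UnitI where
  funMap {n} f x :=
    match f with
    | F01.zero => ⟨0, by constructor <;> norm_num⟩
    | F01.one => ⟨1, by constructor <;> norm_num⟩
    | F01.ca => ⟨0, by constructor <;> norm_num⟩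
    | F01.cb => ⟨0, by constructor <;> norm_num⟩
    | F01.ff => x 0
  RelMap {n} r x :=
    match r with
    | R01.le => (x 0 : Set.Icc (0:ℝ) 1) ≤ x 1

/-- The base symbols of `LI([0,1])`: the constants `0` and `1` (and the relation `≤`). -/
def baseSyms : Set (Sym L01) := {⟨0, F01.zero⟩, ⟨0, F01.one⟩}

/-- `LI([0,1])`: the theory of the unit interval (all sentences in the base signature true
in `[0,1]`). -/
def T01 : L01.Theory :=
  { s | sentSyms s ⊆ baseSyms ∧ RealizeSent UnitI stdS s }

/-- `Mon_f : ∀ x y (x ≤ y → f(x) ≤ f(y))`. -/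
def monClause : Clause L01 :=
  ⟨2, [Lit.nrel R01.le ![Term.var 0, Term.var 1],
       Lit.rel R01.le ![Term.func F01.ff ![Term.var 0], Term.func F01.ff ![Term.var 1] ] ]⟩

/-- `∀ x (f(x) ≤ 1)`. -/
def boundClause : Clause L01 :=
  ⟨1, [Lit.rel R01.le ![Term.func F01.ff ![Term.var 0], Term.func F01.one ![] ] ]⟩

def K01 : Set (Clause L01) := {monClause, boundClause}

/-- `G = (a ≤ b) ∧ (b ≤ f(b))`. -/
def G01 : Set (GClause L01) :=
  { [Lit.rel R01.le ![constT F01.ca, constT F01.cb] ],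
    [Lit.rel R01.le ![constT F01.cb, Term.func F01.ff ![constT F01.cb] ] ] }

/-- The ground term `fⁿ(1)`. -/
def fpow : ℕ → GTerm L01
  | 0 => constT F01.one
  | n + 1 => Term.func F01.ff ![fpow n]

/-- The atomic sentence `t ≤ u` for ground terms `t`, `u`. -/
def leSent (t u : GTerm L01) : L01.Sentence :=
  FirstOrder.Language.BoundedFormula.rel R01.le
    ![Term.relabel Sum.inl t, Term.relabel Sum.inl u]

/-!
In every model of `T ∪ G`, `b ≤ f b ≤ 1` and monotonicity of `f` give `b ≤ fⁿ(1)` by induction,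
hence `a ≤ fⁿ(1)`.

For the converse, two models on `[0,1]`. In `model₁` (`a = 1/4`, `b = 1/2`, `f` halving below `1/2`
and `x ↦ (x + 1/2)/2` above) `G` holds and `fʲ(1) = (1 + 2⁻ʲ)/2`. In `model₂ k` (`a = 3/4 · 2⁻ᵏ`,
`f` halving) `fʲ(1) = 2⁻ʲ`, so `a` lies strictly between `f^{k+1}(1)` and `fᵏ(1)`. A ground term
over `0, 1, a, f` not containing `f^{k+1}(1)` is either some `fʲ(1)` with `j ≤ k`, or its values
are `x ≤ 1/4` in `model₁` and `3 · 2⁻ᵏ · x` in `model₂ k`. On such pairs of values the passage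
from `model₁` to `model₂ k` is strictly monotone, so both models agree on every quantifier-free
`ψ` avoiding `f^{k+1}(1)`; as `ψ` holds in `model₁`, it does not entail `a ≤ f^{k+1}(1)`.

A quantifier-free `ψ` has terms of bounded height, so it misses some `f^{k+1}(1)`, and the two
facts together contradict the interpolant property for `θ = (a ≤ f^{k+1}(1))`.
-/

section Generic

variable {L : FirstOrder.Language.{0, 0}}

theorem TVal_eq_of_agreeOn {M : Type} {S₁ S₂ : L.Structure M} {F : Set (Sym L)}
    (h : AgreeOn M S₁ S₂ F) {α : Type} (v : α → M) :
    ∀ t : L.Term α, termSyms t ⊆ F → TVal M S₁ v t = TVal M S₂ v t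
  | .var _, _ => rfl
  | .func f ts, hF => by
    have hts : ∀ i, TVal M S₁ v (ts i) = TVal M S₂ v (ts i) := fun i =>
      TVal_eq_of_agreeOn h v (ts i) fun s hs =>
        hF (Set.mem_insert_of_mem _ (Set.mem_iUnion_of_mem i hs))
    have := h.1 _ f (hF (Set.mem_insert _ _)) (fun i => TVal M S₂ v (ts i))
    show FunM M S₁ f (fun i => TVal M S₁ v (ts i)) = FunM M S₂ f (fun i => TVal M S₂ v (ts i))
    rwa [funext hts]

theorem realize_iff_of_agreeOn {M : Type} {S₁ S₂ : L.Structure M} {F : Set (Sym L)}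
    (h : AgreeOn M S₁ S₂ F) {α : Type} {n : ℕ} (φ : L.BoundedFormula α n) (hF : bfSyms φ ⊆ F)
    (v : α → M) (xs : Fin n → M) :
    @BoundedFormula.Realize L M S₁ α n φ v xs ↔ @BoundedFormula.Realize L M S₂ α n φ v xs := by
  induction φ with
  | falsum => rfl
  | equal t u =>
    exact Eq.congr (TVal_eq_of_agreeOn h _ t fun s hs => hF (Or.inl hs))
      (TVal_eq_of_agreeOn h _ u fun s hs => hF (Or.inr hs))
  | rel R ts =>
    have hts : ∀ i, TVal M S₁ (Sum.elim v xs) (ts i) = TVal M S₂ (Sum.elim v xs) (ts i) :=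
      fun i => TVal_eq_of_agreeOn h _ (ts i) fun s hs => hF (Set.mem_iUnion_of_mem i hs)
    have := h.2 _ R (fun i => TVal M S₂ (Sum.elim v xs) (ts i))
    show RelM M S₁ R (fun i => TVal M S₁ _ (ts i)) ↔ RelM M S₂ R (fun i => TVal M S₂ _ (ts i))
    rwa [funext hts]
  | imp φ ψ ihφ ihψ =>
    exact imp_congr (ihφ (fun s hs => hF (Or.inl hs)) xs) (ihψ (fun s hs => hF (Or.inr hs)) xs)
  | all φ ih => exact forall_congr' fun x => ih hF _

theorem realizeSent_iff_realize {M : Type} (S : L.Structure M) (φ : L.Sentence) :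
    RealizeSent M S φ ↔ @Sentence.Realize L M S φ := by
  let := S
  exact iff_of_eq (congrArg (Formula.Realize φ) (Subsingleton.elim _ _))

theorem TVal_cast {M : Type} (S : L.Structure M) {α : Type} (v : α → M) (t : GTerm L) :
    TVal M S v (GTerm.cast t) = GVal M S t := by
  simp only [TVal, GVal, GTerm.cast, Term.realize_relabel]
  congr 1
  exact Subsingleton.elim _ _

def AvoidingTerm (Keep : Set (Sym L)) (g : GTerm L) {α : Type} (t : L.Term α) : Prop :=
  termSyms t ⊆ Keep ∧ GTerm.cast g ∉ subterms t

section AvoidingTerm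

variable {Keep : Set (Sym L)} {g : GTerm L} {α : Type}

theorem AvoidingTerm.sym_mem {n : ℕ} {f : L.Functions n} {ts : Fin n → L.Term α}
    (h : AvoidingTerm Keep g (Term.func f ts)) : (⟨n, f⟩ : Sym L) ∈ Keep :=
  h.1 (Set.mem_insert _ _)

theorem AvoidingTerm.ne {t : L.Term α} (h : AvoidingTerm Keep g t) : t ≠ GTerm.cast g := by
  rintro rfl
  cases g with
  | var e => exact e.elim
  | func f ts => exact h.2 (Set.mem_insert _ _)

theorem AvoidingTerm.arg {n : ℕ} {f : L.Functions n} {ts : Fin n → L.Term α}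
    (h : AvoidingTerm Keep g (Term.func f ts)) (i : Fin n) : AvoidingTerm Keep g (ts i) :=
  ⟨fun _ hs => h.1 (Set.mem_insert_of_mem _ (Set.mem_iUnion_of_mem i hs)),
    fun hi => h.2 (Set.mem_insert_of_mem _ (Set.mem_iUnion_of_mem i hi))⟩

end AvoidingTerm

theorem realize_iff_of_isQF {M N : Type} {SM : L.Structure M} {SN : L.Structure N}
    {Keep : Set (Sym L)} {g : GTerm L} {α : Type} {n : ℕ}
    {v : α → M} {xs : Fin n → M} {w : α → N} {ys : Fin n → N}
    (heq : ∀ t u : L.Term (α ⊕ Fin n), AvoidingTerm Keep g t → AvoidingTerm Keep g u →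
      (TVal M SM (Sum.elim v xs) t = TVal M SM (Sum.elim v xs) u ↔
        TVal N SN (Sum.elim w ys) t = TVal N SN (Sum.elim w ys) u))
    (hrel : ∀ {l : ℕ} (R : L.Relations l) (ts : Fin l → L.Term (α ⊕ Fin n)),
      (∀ i, AvoidingTerm Keep g (ts i)) →
      (RelM M SM R (fun i => TVal M SM (Sum.elim v xs) (ts i)) ↔
        RelM N SN R (fun i => TVal N SN (Sum.elim w ys) (ts i))))
    {φ : L.BoundedFormula α n} (hφ : φ.IsQF) (hKeep : bfSyms φ ⊆ Keep) (hg : g ∉ bfGTerms φ) :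
    @BoundedFormula.Realize L M SM α n φ v xs ↔ @BoundedFormula.Realize L N SN α n φ w ys := by
  induction hφ with
  | falsum => rfl
  | of_isAtomic hat =>
    cases hat with
    | equal t u =>
      exact heq t u ⟨fun s hs => hKeep (Or.inl hs), fun h => hg (Or.inl h)⟩
        ⟨fun s hs => hKeep (Or.inr hs), fun h => hg (Or.inr h)⟩
    | rel R ts =>
      exact hrel R ts fun i =>
        ⟨fun s hs => hKeep (Set.mem_iUnion_of_mem i hs), fun h => hg ⟨i, h⟩⟩
  | imp _ _ ihφ ihψ =>
    exact imp_congr (ihφ (fun s hs => hKeep (Or.inl hs)) fun h => hg (Or.inl h))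
      (ihψ (fun s hs => hKeep (Or.inr hs)) fun h => hg (Or.inr h))

theorem termSyms_relabel {α β : Type} (e : α → β) :
    ∀ t : L.Term α, termSyms (t.relabel e) = termSyms t
  | .var _ => rfl
  | .func f ts => by
    simp only [Term.relabel, termSyms, termSyms_relabel e]

def termHeight {α : Type} : L.Term α → ℕ
  | .var _ => 0
  | .func _ ts => (Finset.univ.sup fun i => termHeight (ts i)) + 1

theorem termHeight_le_of_mem_subterms {α : Type} {s : L.Term α} :
    ∀ {t : L.Term α}, s ∈ subterms t → termHeight s ≤ termHeight t
  | .var _, h => by rw [show s = _ from h]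
  | .func f ts, h => by
    rcases h with rfl | h
    · rfl
    · obtain ⟨i, hi⟩ := Set.mem_iUnion.1 h
      calc termHeight s ≤ termHeight (ts i) := termHeight_le_of_mem_subterms hi
        _ ≤ Finset.univ.sup fun i => termHeight (ts i) :=
          Finset.le_sup (f := fun i => termHeight (ts i)) (Finset.mem_univ i)
        _ ≤ termHeight (Term.func f ts) := Nat.le_succ _

theorem termHeight_relabel {α β : Type} (e : α → β) :
    ∀ t : L.Term α, termHeight (t.relabel e) = termHeight t
  | .var _ => rfl
  | .func f ts => by
    simp only [Term.relabel, termHeight, termHeight_relabel e]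

theorem termHeight_le_of_cast_mem_subterms {α : Type} {g : GTerm L} {t : L.Term α}
    (h : GTerm.cast g ∈ subterms t) : termHeight g ≤ termHeight t :=
  (termHeight_relabel _ g).symm.trans_le (termHeight_le_of_mem_subterms h)

theorem exists_termHeight_le_of_mem_bfGTerms {α : Type} {n : ℕ} (φ : L.BoundedFormula α n) :
    ∃ N, ∀ g ∈ bfGTerms φ, termHeight g ≤ N := by
  induction φ with
  | falsum => exact ⟨0, fun _ h => h.elim⟩
  | equal t u =>
    exact ⟨max (termHeight t) (termHeight u), fun g hg =>
      hg.elim (fun h => le_max_of_le_left (termHeight_le_of_cast_mem_subterms h))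
        fun h => le_max_of_le_right (termHeight_le_of_cast_mem_subterms h)⟩
  | rel R ts =>
    refine ⟨Finset.univ.sup fun i => termHeight (ts i), fun g ⟨i, hi⟩ => ?_⟩
    exact (termHeight_le_of_cast_mem_subterms hi).trans
      (Finset.le_sup (f := fun i => termHeight (ts i)) (Finset.mem_univ i))
  | imp _ _ ih₁ ih₂ =>
    obtain ⟨N₁, h₁⟩ := ih₁
    obtain ⟨N₂, h₂⟩ := ih₂
    exact ⟨max N₁ N₂, fun g hg =>
      hg.elim (fun h => le_max_of_le_left (h₁ g h)) fun h => le_max_of_le_right (h₂ g h)⟩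
  | all _ ih => exact ih

end Generic

theorem comp_vec₂ {α β : Type} (F : α → β) (a b : α) :
    (fun i => F (![a, b] i)) = ![F a, F b] := by
  funext i
  fin_cases i <;> rfl

section Semantics

variable {M : Type} (S : L01.Structure M)

def leIn (x y : M) : Prop := RelM M S R01.le ![x, y]

def fIn (x : M) : M := FunM M S F01.ff ![x]

theorem TVal_func_ff {α : Type} (v : α → M) (t : L01.Term α) :
    TVal M S v (Term.func F01.ff ![t]) = fIn S (TVal M S v t) := by
  show FunM M S F01.ff (fun i => TVal M S v (![t] i)) = _
  congr 1
  funext i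
  fin_cases i
  rfl

theorem TVal_func_of_nullary {α : Type} (v : α → M) (c : F01 0)
    (ts : Fin 0 → L01.Term α) : TVal M S v (Term.func c ts) = FunM M S c ![] :=
  congrArg (FunM M S c) (Subsingleton.elim _ _)

theorem GVal_func_ff (t : GTerm L01) : GVal M S (Term.func F01.ff ![t]) = fIn S (GVal M S t) :=
  TVal_func_ff S _ t

theorem GVal_fpow_succ (n : ℕ) : GVal M S (fpow (n + 1)) = fIn S (GVal M S (fpow n)) :=
  GVal_func_ff S (fpow n)

theorem realizeSent_leSent (t u : GTerm L01) :
    RealizeSent M S (leSent t u) ↔ leIn S (GVal M S t) (GVal M S u) := by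
  show RelM M S R01.le (fun i => TVal M S _ (![_, _] i)) ↔ _
  rw [comp_vec₂]
  simp only [TVal, Term.realize_relabel]
  rw [Subsingleton.elim (Sum.elim _ _ ∘ Sum.inl) fun e : Empty => e.elim]
  rfl

theorem gClauseHolds_le_iff (t u : GTerm L01) :
    GClauseHolds M S [Lit.rel R01.le ![t, u] ] ↔ leIn S (GVal M S t) (GVal M S u) := by
  simp only [GClauseHolds, List.mem_singleton, exists_eq_left, Lit.Realize, comp_vec₂]
  rfl

theorem modelsG_G01_iff :
    ModelsG M S G01 ↔ leIn S (GVal M S (constT F01.ca)) (GVal M S (constT F01.cb)) ∧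
      leIn S (GVal M S (constT F01.cb)) (fIn S (GVal M S (constT F01.cb))) := by
  simp only [ModelsG, G01, Set.forall_mem_insert, Set.mem_singleton_iff, forall_eq,
    gClauseHolds_le_iff, GVal_func_ff]

theorem modelsK_K01_iff :
    ModelsK M S K01 ↔ (∀ x y, leIn S x y → leIn S (fIn S x) (fIn S y)) ∧
      ∀ x, leIn S (fIn S x) (FunM M S F01.one ![]) := by
  simp only [ModelsK, K01, Set.forall_mem_insert, Set.mem_singleton_iff, forall_eq, ClauseHolds,
    monClause, boundClause, List.mem_cons, exists_eq_or_imp, Lit.Realize, comp_vec₂,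
    List.not_mem_nil, or_false, exists_eq_left, TVal_func_ff, TVal_func_of_nullary]
  constructor
  · rintro ⟨hmon, hbound⟩
    exact ⟨fun x y hxy => (hmon ![x, y]).resolve_left (not_not.2 hxy), fun x => hbound ![x]⟩
  · rintro ⟨hmon, hbound⟩
    refine ⟨fun v => ?_, fun v => ?_⟩
    · exact (em' (leIn S (v 0) (v 1))).imp_right (hmon _ _)
    · exact hbound (v 0)

theorem transitive_mem_T01 : Relations.transitive (L := L01) R01.le ∈ T01 := by
  refine ⟨?_, ?_⟩
  · simp [Relations.transitive, Relations.boundedFormula₂, Relations.boundedFormula, bfSyms,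
      termSyms, Fin.forall_fin_two]
  · let := stdS
    exact (realizeSent_iff_realize _ _).2
      (Relations.realize_transitive.2 ⟨fun _ _ _ => le_trans (α := UnitI)⟩)

theorem leIn_trans (hT : ModelsT M S T01) {x y z : M} : leIn S x y → leIn S y z → leIn S x z := by
  let := S
  exact (Relations.realize_transitive.1
    ((realizeSent_iff_realize S _).1 (hT _ transitive_mem_T01))).trans x y z

end Semantics

section Entailment

variable {M : Type} {S : L01.Structure M}

theorem GVal_fpow_zero : GVal M S (fpow 0) = FunM M S F01.one ![] :=
  TVal_func_of_nullary S _ F01.one _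

theorem leIn_GVal_cb_fpow (hT : ModelsT M S T01) (hK : ModelsK M S K01) (hG : ModelsG M S G01)
    (n : ℕ) : leIn S (GVal M S (constT F01.cb)) (GVal M S (fpow n)) := by
  obtain ⟨hmon, hbound⟩ := (modelsK_K01_iff S).1 hK
  have hb := ((modelsG_G01_iff S).1 hG).2
  induction n with
  | zero => exact leIn_trans S hT hb (GVal_fpow_zero ▸ hbound _)
  | succ n ih => exact GVal_fpow_succ S n ▸ leIn_trans S hT hb (hmon _ _ ih)

theorem entailsC_le_fpow (n : ℕ) : EntailsC T01 K01 G01 (leSent (constT F01.ca) (fpow n)) :=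
  fun _ S _ hT hK hG => (realizeSent_leSent S _ _).2 <|
    leIn_trans S hT ((modelsG_G01_iff S).1 hG).1 (leIn_GVal_cb_fpow hT hK hG n)

end Entailment

section IntervalModels

noncomputable def intervalS (a b : UnitI) (g : UnitI → UnitI) : L01.Structure UnitI where
  funMap f x :=
    match f with
    | F01.zero => 0
    | F01.one => 1
    | F01.ca => a
    | F01.cb => b
    | F01.ff => g (x 0)
  RelMap r x :=
    match r with
    | R01.le => x 0 ≤ x 1

variable (a b : UnitI) (g : UnitI → UnitI)

theorem agreeOn_stdS_intervalS : AgreeOn UnitI stdS (intervalS a b g) baseSyms := by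
  refine ⟨?_, fun n r x => by cases r; rfl⟩
  rintro n f (h | h) x <;> cases h <;> rfl

theorem modelsT_intervalS : ModelsT UnitI (intervalS a b g) T01 :=
  fun φ ⟨hsyms, htrue⟩ =>
    (realize_iff_of_agreeOn (agreeOn_stdS_intervalS a b g) φ hsyms _ _).1 htrue

theorem modelsK_intervalS (hg : Monotone g) : ModelsK UnitI (intervalS a b g) K01 :=
  (modelsK_K01_iff _).2 ⟨fun _ _ h => hg h, fun x => unitInterval.le_one (g x)⟩

theorem modelsG_intervalS (hab : a ≤ b) (hb : b ≤ g b) : ModelsG UnitI (intervalS a b g) G01 :=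
  (modelsG_G01_iff _).2 ⟨hab, hb⟩

theorem GVal_fpow_intervalS (n : ℕ) : GVal UnitI (intervalS a b g) (fpow n) = g^[n] 1 := by
  induction n with
  | zero => exact GVal_fpow_zero
  | succ n ih => rw [GVal_fpow_succ, ih, Function.iterate_succ_apply']; rfl

end IntervalModels

noncomputable def halve (x : UnitI) : UnitI :=
  ⟨x / 2, by linarith [x.2.1], by linarith [x.2.2]⟩

noncomputable def halveOrMidpoint (x : UnitI) : UnitI :=
  if (x : ℝ) < 1 / 2 then halve x else ⟨(x + 1 / 2) / 2, by linarith [x.2.1], by linarith [x.2.2]⟩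

theorem halve_monotone : Monotone halve := fun x y (h : (x : ℝ) ≤ y) =>
  show (x : ℝ) / 2 ≤ y / 2 by linarith

theorem halveOrMidpoint_monotone : Monotone halveOrMidpoint := by
  intro x y (h : (x : ℝ) ≤ y)
  unfold halveOrMidpoint halve
  split_ifs <;> (show (_ : ℝ) ≤ _; linarith)

theorem coe_halve_iterate_one (j : ℕ) : ((halve^[j] 1 : UnitI) : ℝ) = (1 / 2) ^ j := by
  induction j with
  | zero => rfl
  | succ j ih =>
    rw [Function.iterate_succ_apply', pow_succ, ← ih]
    exact div_eq_mul_one_div _ _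

theorem coe_halveOrMidpoint_iterate_one (j : ℕ) :
    ((halveOrMidpoint^[j] 1 : UnitI) : ℝ) = (1 + (1 / 2) ^ j) / 2 := by
  induction j with
  | zero => norm_num
  | succ j ih =>
    have hge : ¬ ((halveOrMidpoint^[j] 1 : UnitI) : ℝ) < 1 / 2 := by
      rw [ih]; linarith [pow_pos (one_half_pos (α := ℝ)) j]
    rw [Function.iterate_succ_apply', halveOrMidpoint, if_neg hge]
    show (_ + _) / 2 = _
    rw [ih, pow_succ]
    ring

abbrev keepSyms : Set (Sym L01) := baseSyms ∪ {⟨1, F01.ff⟩, ⟨0, F01.ca⟩}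

theorem cb_not_mem_keepSyms : (⟨0, F01.cb⟩ : Sym L01) ∉ keepSyms := by
  rintro ((h | h) | h | h) <;> cases h

theorem cast_fpow_succ {α : Type} (j : ℕ) :
    (GTerm.cast (fpow (j + 1)) : L01.Term α) = Term.func F01.ff ![GTerm.cast (fpow j)] := by
  show Term.func F01.ff (fun i => Term.relabel _ (![fpow j] i)) = _
  congr 1
  funext i
  fin_cases i
  rfl

theorem cast_fpow_zero {α : Type} (ts : Fin 0 → L01.Term α) :
    Term.func F01.one ts = GTerm.cast (fpow 0) := by
  show Term.func F01.one ts = Term.func F01.one _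
  congr 1
  funext i
  exact i.elim0

noncomputable def model₁ : L01.Structure UnitI :=
  intervalS ⟨1 / 4, by norm_num, by norm_num⟩ ⟨1 / 2, by norm_num, by norm_num⟩ halveOrMidpoint

noncomputable def model₂ (k : ℕ) : L01.Structure UnitI :=
  intervalS ⟨3 / 4 * (1 / 2) ^ k, by positivity, by
    nlinarith [pow_le_one₀ (n := k) (by norm_num : (0 : ℝ) ≤ 1 / 2) (by norm_num)]⟩ 0 halve

/-- The pairs of values (in `model₁`, in `model₂ k`, with `c = 2⁻ᵏ`) taken by a term that avoids
`f^{k+1}(1)`: the `a`- and `0`-orbits, scaled by `3c`, and the points `fʲ(1)`, `j ≤ k`. -/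
def Matched (c x y : ℝ) : Prop := (x ≤ 1 / 4 ∧ y = 3 * c * x) ∨ (c ≤ y ∧ 2 * x = 1 + y)

theorem Matched.le_iff {c x y x' y' : ℝ} (hc : 0 < c) (h : Matched c x y) (h' : Matched c x' y') :
    x ≤ x' ↔ y ≤ y' := by
  rcases h with ⟨hx, rfl⟩ | ⟨hy, hxy⟩ <;> rcases h' with ⟨hx', rfl⟩ | ⟨hy', hxy'⟩
  · exact (mul_le_mul_iff_of_pos_left (by positivity)).symm
  · exact iff_of_true (by linarith) (by nlinarith)
  · exact iff_of_false (by linarith) (by nlinarith)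
  · constructor <;> intro <;> linarith

theorem Matched.eq_iff {c x y x' y' : ℝ} (hc : 0 < c) (h : Matched c x y) (h' : Matched c x' y') :
    x = x' ↔ y = y' := by
  rw [le_antisymm_iff, le_antisymm_iff, h.le_iff hc h', h'.le_iff hc h]

theorem lowMatched_or_eq_cast_fpow (k : ℕ) (v w : Empty ⊕ Fin 0 → UnitI) :
    ∀ t : L01.Term (Empty ⊕ Fin 0), AvoidingTerm keepSyms (fpow (k + 1)) t →
      ((TVal UnitI model₁ v t : ℝ) ≤ 1 / 4 ∧
        (TVal UnitI (model₂ k) w t : ℝ) = 3 * (1 / 2) ^ k * (TVal UnitI model₁ v t : ℝ)) ∨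
      ∃ j ≤ k, t = GTerm.cast (fpow j)
  | .var (.inl e), _ => e.elim
  | .var (.inr i), _ => i.elim0
  | .func F01.zero _, _ => .inl ⟨show (0 : ℝ) ≤ 1 / 4 by norm_num, show (0 : ℝ) = _ * 0 by ring⟩
  | .func F01.one ts, _ => .inr ⟨0, k.zero_le, cast_fpow_zero ts⟩
  | .func F01.ca _, _ => .inl ⟨le_rfl, show 3 / 4 * _ = _ * (1 / 4 : ℝ) by ring⟩
  | .func F01.cb _, ht => absurd ht.sym_mem cb_not_mem_keepSyms
  | .func F01.ff ts, ht => by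
    rcases lowMatched_or_eq_cast_fpow k v w (ts 0) (ht.arg 0) with ⟨hlow, hval⟩ | ⟨j, hj, hj0⟩
    · left
      show (halveOrMidpoint (TVal UnitI model₁ v (ts 0)) : ℝ) ≤ 1 / 4 ∧
        (halve (TVal UnitI (model₂ k) w (ts 0)) : ℝ) =
          3 * (1 / 2) ^ k * (halveOrMidpoint (TVal UnitI model₁ v (ts 0)) : ℝ)
      rw [halveOrMidpoint, if_pos (by linarith)]
      exact ⟨show (_ : ℝ) / 2 ≤ _ by linarith, show (_ : ℝ) / 2 = _ * (_ / 2) by rw [hval]; ring⟩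
    · right
      have hts : ts = ![ts 0] := by funext i; fin_cases i; rfl
      rw [hts, hj0, ← cast_fpow_succ] at ht ⊢
      rcases hj.lt_or_eq with hjk | rfl
      · exact ⟨j + 1, hjk, rfl⟩
      · exact absurd rfl ht.ne

theorem matched_of_avoidingTerm (k : ℕ) (v w : Empty ⊕ Fin 0 → UnitI)
    (t : L01.Term (Empty ⊕ Fin 0)) (ht : AvoidingTerm keepSyms (fpow (k + 1)) t) :
    Matched ((1 / 2) ^ k) (TVal UnitI model₁ v t) (TVal UnitI (model₂ k) w t) := by
  rcases lowMatched_or_eq_cast_fpow k v w t ht with hlow | ⟨j, hj, rfl⟩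
  · exact .inl hlow
  · right
    simp only [TVal_cast, model₁, model₂, GVal_fpow_intervalS, coe_halve_iterate_one,
      coe_halveOrMidpoint_iterate_one]
    exact ⟨pow_le_pow_of_le_one (by norm_num) (by norm_num) hj, by ring⟩

theorem realizeSent_model₁_iff_model₂ (k : ℕ) {ψ : L01.Sentence} (hqf : ψ.IsQF)
    (hsyms : sentSyms ψ ⊆ keepSyms) (hk : fpow (k + 1) ∉ sentGTerms ψ) :
    RealizeSent UnitI model₁ ψ ↔ RealizeSent UnitI (model₂ k) ψ := by
  have hc : (0 : ℝ) < (1 / 2) ^ k := by positivity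
  refine realize_iff_of_isQF (fun t u ht hu => ?_) (fun R ts hts => ?_) hqf hsyms hk
  · rw [Subtype.ext_iff, Subtype.ext_iff]
    exact (matched_of_avoidingTerm k _ _ t ht).eq_iff hc (matched_of_avoidingTerm k _ _ u hu)
  · cases R
    exact (matched_of_avoidingTerm k _ _ _ (hts 0)).le_iff hc
      (matched_of_avoidingTerm k _ _ _ (hts 1))

theorem modelsG_model₁ : ModelsG UnitI model₁ G01 :=
  modelsG_intervalS _ _ _ (show (1 / 4 : ℝ) ≤ 1 / 2 by norm_num) <| by
    show (1 / 2 : ℝ) ≤ (halveOrMidpoint _ : ℝ)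
    rw [halveOrMidpoint, if_neg (by norm_num)]
    show (1 / 2 : ℝ) ≤ (1 / 2 + 1 / 2) / 2
    norm_num

theorem not_realizeSent_model₂_le_fpow (k : ℕ) :
    ¬ RealizeSent UnitI (model₂ k) (leSent (constT F01.ca) (fpow (k + 1))) := by
  rw [realizeSent_leSent, model₂, GVal_fpow_intervalS]
  intro h
  have h' : 3 / 4 * (1 / 2 : ℝ) ^ k ≤ (1 / 2) ^ (k + 1) := by
    rw [← coe_halve_iterate_one (k + 1)]
    exact h
  rw [pow_succ] at h'
  nlinarith [pow_pos (one_half_pos (α := ℝ)) k]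

theorem not_entailsS_le_fpow {ψ : L01.Sentence} (hqf : ψ.IsQF) (hsyms : sentSyms ψ ⊆ keepSyms)
    {k : ℕ} (hk : fpow (k + 1) ∉ sentGTerms ψ) (hent : EntailsC T01 K01 G01 ψ) :
    ¬ EntailsS T01 K01 ψ (leSent (constT F01.ca) (fpow (k + 1))) := fun hE =>
  have hψ₁ := hent UnitI _ ⟨0⟩ (modelsT_intervalS _ _ _)
    (modelsK_intervalS _ _ _ halveOrMidpoint_monotone) modelsG_model₁
  not_realizeSent_model₂_le_fpow k <| hE UnitI _ ⟨0⟩ (modelsT_intervalS _ _ _)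
    (modelsK_intervalS _ _ _ halve_monotone) ((realizeSent_model₁_iff_model₂ k hqf hsyms hk).1 hψ₁)

theorem termHeight_fpow (n : ℕ) : termHeight (fpow n) = n + 1 := by
  induction n with
  | zero => rfl
  | succ n ih =>
    show (Finset.univ.sup fun i => termHeight (![fpow n] i)) + 1 = n + 2
    rw [Finset.univ_unique, Finset.sup_singleton]
    exact congrArg (· + 1) ih

theorem exists_fpow_not_mem_sentGTerms (ψ : L01.Sentence) : ∃ k, fpow (k + 1) ∉ sentGTerms ψ := by
  obtain ⟨N, hN⟩ := exists_termHeight_le_of_mem_bfGTerms ψ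
  refine ⟨N, fun h => ?_⟩
  have := hN _ h
  rw [termHeight_fpow] at this
  omega

theorem termSyms_fpow_subset (n : ℕ) : termSyms (fpow n) ⊆ keepSyms := by
  induction n with
  | zero => exact Set.insert_subset (.inl (.inr rfl)) (Set.iUnion_subset fun i => i.elim0)
  | succ n ih =>
    refine Set.insert_subset (.inr (.inl rfl)) (Set.iUnion_subset fun i => ?_)
    fin_cases i
    exact ih

theorem sentSyms_leSent_subset (n : ℕ) :
    sentSyms (leSent (constT F01.ca) (fpow n)) ⊆ keepSyms := by
  refine Set.iUnion_subset fun i => ?_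
  fin_cases i
  · exact (termSyms_relabel _ _).trans_subset
      (Set.insert_subset (.inr (.inr rfl)) (Set.iUnion_subset fun i => i.elim0))
  · exact (termSyms_relabel _ _).trans_subset (termSyms_fpow_subset n)

/-- With `T = LI([0,1]) ∪ {Mon_f, ∀x (f(x) ≤ 1)}` and
`G = (a ≤ b) ∧ (b ≤ f(b))`:
(i) `G ⊨_T a ≤ fⁿ(1)` for all `n`;
(ii) for every quantifier-free formula `ψ` over the base signature extended with `f` and `a`,
if `f^{k+1}(1)` does not occur in `ψ` and `G ⊨_T ψ`, then `ψ ⊭_T a ≤ f^{k+1}(1)`;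
hence (iii) `G` has no `T`-general uniform interpolant w.r.t. `{f, a}`. -/
theorem no_general_uniform_interpolant_monotone_bounded :
    (∀ n : ℕ, EntailsC T01 K01 G01 (leSent (constT F01.ca) (fpow n))) ∧
    (∀ (ψ : L01.Sentence), ψ.IsQF →
        sentSyms ψ ⊆ baseSyms ∪ {⟨1, F01.ff⟩, ⟨0, F01.ca⟩} →
        ∀ k : ℕ, fpow (k + 1) ∉ sentGTerms ψ →
          EntailsC T01 K01 G01 ψ →
          ¬ EntailsS T01 K01 ψ (leSent (constT F01.ca) (fpow (k + 1)))) ∧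
    ¬ ∃ ψ : L01.Sentence, IsGUIg T01 K01 G01 (baseSyms ∪ {⟨1, F01.ff⟩, ⟨0, F01.ca⟩}) ψ := by
  refine ⟨entailsC_le_fpow, fun ψ hqf hsyms k hk => not_entailsS_le_fpow hqf hsyms hk, ?_⟩
  rintro ⟨ψ, hqf, hsyms, hent, hinterp⟩
  obtain ⟨k, hk⟩ := exists_fpow_not_mem_sentGTerms ψ
  exact not_entailsS_le_fpow hqf hsyms hk hent <|
    hinterp _ (BoundedFormula.IsAtomic.rel _ _).isQF
      (fun _ hs => sentSyms_leSent_subset _ hs.1) (entailsC_le_fpow _)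

end PaperSE
end

section
/- Let T0 ⊆ T0 ∪ K_1 ⊆ T0 ∪ K_1 ∪ K_2 be a chain of local theory extensions such that K_1 and K_2 are sets of flat and linear clauses. Then T0 ∪ K_1 ⊆ T0 ∪ K_1 ∪ K_2 is a local theory extension. -/
/- Common framework: first-order signatures with designated sets of interpreted symbols,
uninterpreted (extension) function symbols and fresh constants, clauses, flatness/linearity,
instances, locality of theory extensions, (general) uniform interpolants, and a semantic
specification of the symbol-elimination Algorithm 1 of the paper. -/

open FirstOrder FirstOrder.Language

namespace PaperSE

variable {L : FirstOrder.Language.{0, 0}}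

lemma termSyms_subset_of_mem_subterms {α : Type} {s t : L.Term α} (h : t ∈ subterms s) :
    termSyms t ⊆ termSyms s := by
  induction s with
  | var a =>
      rw [subterms, Set.mem_singleton_iff] at h
      rw [h]
  | func f ts ih =>
      simp only [subterms, Set.mem_insert_iff, Set.mem_iUnion] at h
      rcases h with rfl | ⟨i, hi⟩
      · exact subset_rfl
      · exact (ih i hi).trans fun p hp => Or.inr (Set.mem_iUnion.2 ⟨i, hp⟩)

lemma rootIn_mono {F F' : Set (Sym L)} (h : F ⊆ F') {α : Type} {t : L.Term α}
    (ht : rootIn F t) : rootIn F' t := by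
  cases t with
  | var _ => exact ht.elim
  | func _ _ => exact h ht

lemma exists_mem_termSyms_cast_of_rootIn {F : Set (Sym L)} {t : GTerm L} (h : rootIn F t)
    {α : Type} : ∃ p ∈ F, p ∈ termSyms (GTerm.cast (α := α) t) := by
  cases t with
  | var e => exact e.elim
  | func f ts => exact ⟨⟨_, f⟩, h, Set.mem_insert _ _⟩

lemma not_rootIn_of_mem_subterms_of_disjoint {F : Set (Sym L)} {K : Set (Clause L)}
    (hK : Disjoint F (ClausesSyms K)) {C : Clause L} (hC : C ∈ K)
    {l : Lit L (Fin C.nvars)} (hl : l ∈ C.lits) {s : L.Term (Fin C.nvars)}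
    (hs : s ∈ Lit.terms l) {t : GTerm L} (ht : GTerm.cast t ∈ subterms s) : ¬ rootIn F t := by
  intro hroot
  obtain ⟨p, hpF, hpt⟩ := exists_mem_termSyms_cast_of_rootIn hroot
  refine Set.disjoint_left.1 hK hpF ?_
  simp only [ClausesSyms, Clause.syms, Lit.syms, Set.mem_iUnion]
  exact ⟨C, hC, l, hl, s, hs, termSyms_subset_of_mem_subterms ht hpt⟩

lemma mem_estKG_of_mem_estKG_union {F F' : Set (Sym L)} {K1 K2 : Set (Clause L)}
    {G : Set (GClause L)} (hK1 : Disjoint F (ClausesSyms K1)) {t : GTerm L}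
    (ht : t ∈ estKG F' (K1 ∪ K2) G) (hroot : rootIn F t) : t ∈ estKG F K2 G := by
  obtain ⟨-, ⟨C, hC1 | hC2, l, hl, s, hs, hsub⟩ | hG⟩ := ht
  · exact (not_rootIn_of_mem_subterms_of_disjoint hK1 hC1 hl hs hsub hroot).elim
  · exact ⟨hroot, Or.inl ⟨C, hC2, l, hl, s, hs, hsub⟩⟩
  · exact ⟨hroot, Or.inr hG⟩

lemma instancesIn_union (F : Set (Sym L)) (K1 K2 : Set (Clause L)) (Tt : Set (GTerm L)) :
    instancesIn F (K1 ∪ K2) Tt = instancesIn F K1 Tt ∪ instancesIn F K2 Tt := by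
  ext D
  simp only [instancesIn, Set.mem_union, Set.mem_ofPred_eq, or_and_right, exists_or]

lemma instancesIn_subset_instancesIn {F F' : Set (Sym L)} (hF : F ⊆ F') (K : Set (Clause L))
    {Tt Tt' : Set (GTerm L)} (hT : ∀ t ∈ Tt', rootIn F t → t ∈ Tt) :
    instancesIn F' K Tt' ⊆ instancesIn F K Tt := by
  rintro D ⟨C, hC, σ, rfl, hσ⟩
  exact ⟨C, hC, σ, rfl, fun t ht hroot => hT t (hσ t ht (rootIn_mono hF hroot)) hroot⟩

lemma Lit.realize_subst (M : Type) (S : L.Structure M) {n : ℕ}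
    (σ : Fin n → GTerm L) (l : Lit L (Fin n)) :
    Lit.Realize M S (fun e : Empty => e.elim) (Lit.subst σ l) ↔
      Lit.Realize M S (fun i => GVal M S (σ i)) l := by
  cases l <;> simp [Lit.Realize, Lit.subst, TVal, GVal, Term.realize_subst]

section Models

variable {M : Type} {S : L.Structure M}

lemma ClauseHolds.instantiate {C : Clause L} (hC : ClauseHolds M S C)
    (σ : Fin C.nvars → GTerm L) : GClauseHolds M S (C.instantiate σ) := by
  obtain ⟨l, hl, hreal⟩ := hC fun i => GVal M S (σ i)
  exact ⟨Lit.subst σ l, List.mem_map_of_mem hl, (Lit.realize_subst M S σ l).2 hreal⟩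

lemma ModelsK.instancesIn {K : Set (Clause L)} (hK : ModelsK M S K) (F : Set (Sym L))
    (Tt : Set (GTerm L)) : ModelsG M S (instancesIn F K Tt) := by
  rintro D ⟨C, hC, σ, rfl, -⟩
  exact (hK C hC).instantiate σ

lemma modelsK_empty : ModelsK M S (∅ : Set (Clause L)) :=
  fun _ h => h.elim

lemma modelsK_union {K1 K2 : Set (Clause L)} :
    ModelsK M S (K1 ∪ K2) ↔ ModelsK M S K1 ∧ ModelsK M S K2 := by
  simp only [ModelsK, Set.mem_union, or_imp, forall_and]

lemma modelsG_union {G1 G2 : Set (GClause L)} :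
    ModelsG M S (G1 ∪ G2) ↔ ModelsG M S G1 ∧ ModelsG M S G2 := by
  simp only [ModelsG, Set.mem_union, or_imp, forall_and]

lemma ModelsG.mono {G1 G2 : Set (GClause L)} (h : ModelsG M S G2) (hG : G1 ⊆ G2) :
    ModelsG M S G1 :=
  fun C hC => h C (hG hC)

end Models

/-- Since no symbol of `F` occurs in `K1`, every `F`-rooted term of `est(K1 ∪ K2, G)` already
lies in `est(K2, G)`; hence the `K2`-part of `(K1 ∪ K2)[est(K1 ∪ K2, G)]` lies in `K2[est(K2, G)]`,
while its `K1`-part holds in every model of `K1`. -/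
theorem LocalExt.localExt2_of_disjoint {F F' : Set (Sym L)} (hFF' : F ⊆ F') {T0 : L.Theory}
    {K1 K2 : Set (Clause L)} (hK1 : Disjoint F (ClausesSyms K1))
    (hloc : LocalExt F' T0 (K1 ∪ K2)) : LocalExt2 F T0 K1 K2 := by
  intro G hG
  refine not_congr ⟨?_, ?_⟩
  · rintro ⟨M, hM, S, hT, hK1M, hK2M, hGM⟩
    exact ⟨M, hM, S, hT, hK1M, modelsG_union.2 ⟨hK2M.instancesIn _ _, hGM⟩⟩
  · rintro ⟨M, hM, S, hT, hK1M, hInstG⟩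
    obtain ⟨hInst, hGM⟩ := modelsG_union.1 hInstG
    by_contra hunsat
    have hunsat' := (hloc G hG).1 fun ⟨N, hN, SN, hTN, _, hKN, hGN⟩ =>
      hunsat ⟨N, hN, SN, hTN, (modelsK_union.1 hKN).1, (modelsK_union.1 hKN).2, hGN⟩
    have hK2inst : instancesIn F' K2 (estKG F' (K1 ∪ K2) G) ⊆ instancesIn F K2 (estKG F K2 G) :=
      instancesIn_subset_instancesIn hFF' K2 fun t ht hroot =>
        mem_estKG_of_mem_estKG_union hK1 ht hroot
    refine hunsat' ⟨M, hM, S, hT, modelsK_empty, modelsG_union.2 ⟨?_, hGM⟩⟩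
    rw [instancesIn_union]
    exact modelsG_union.2 ⟨hK1M.instancesIn _ _, hInst.mono hK2inst⟩

theorem chain_second_extension_local_general
    (L : FirstOrder.Language.{0, 0})
    (F0 Sig1 Sig2 : Set (Sym L))
    (hd02 : Disjoint F0 Sig2) (hd12 : Disjoint Sig1 Sig2)
    (T0 : L.Theory)
    (K1 K2 : Set (Clause L))
    (hK1syms : ClausesSyms K1 ⊆ F0 ∪ Sig1)
    -- the chain `T0 ⊆ T0 ∪ K1 ⊆ T0 ∪ K1 ∪ K2` consists of local theory extensions:
    (hloc12 : LocalExt (Sig1 ∪ Sig2) T0 (K1 ∪ K2)) :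
    LocalExt2 Sig2 T0 K1 K2 :=
  hloc12.localExt2_of_disjoint Set.subset_union_right
    ((hd02.symm.union_right hd12.symm).mono_right hK1syms)

/-- Let `T0 ⊆ T0 ∪ K1 ⊆ T0 ∪ K1 ∪ K2` be a chain of local theory
extensions (extension symbols `Sig1` resp. `Sig2`), where `K1` and `K2` are sets of flat and
linear clauses.  Then `T0 ∪ K1 ⊆ T0 ∪ K1 ∪ K2` is a local theory extension. -/
theorem chain_second_extension_local
    (L : FirstOrder.Language.{0, 0})
    (F0 Sig1 Sig2 : Set (Sym L))
    (hd01 : Disjoint F0 Sig1) (hd02 : Disjoint F0 Sig2) (hd12 : Disjoint Sig1 Sig2)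
    (T0 : L.Theory) (hT0 : theorySyms T0 ⊆ F0)
    (K1 K2 : Set (Clause L))
    (hK1syms : ClausesSyms K1 ⊆ F0 ∪ Sig1)
    (hK2syms : ClausesSyms K2 ⊆ F0 ∪ Sig1 ∪ Sig2)
    (hK1flat : ∀ C ∈ K1, C.Flat Sig1) (hK1lin : ∀ C ∈ K1, C.Linear Sig1)
    (hK2flat : ∀ C ∈ K2, C.Flat Sig2) (hK2lin : ∀ C ∈ K2, C.Linear Sig2)
    -- the chain `T0 ⊆ T0 ∪ K1 ⊆ T0 ∪ K1 ∪ K2` consists of local theory extensions: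
    (hloc1 : LocalExt Sig1 T0 K1)
    (hloc12 : LocalExt (Sig1 ∪ Sig2) T0 (K1 ∪ K2)) :
    LocalExt2 Sig2 T0 K1 K2 :=
  chain_second_extension_local_general L F0 Sig1 Sig2 hd02 hd12 T0 K1 K2 hK1syms hloc12

end PaperSE
end
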